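/- Let R : M_ℝ(Ω,Σ) → trace-class self-adjoint operators be a linear reduction map (mapping probability measures onto density operators, with an adjoint R' mapping bounded self-adjoint operators to bounded measurable functions). Then for each rank-one projection P, the set {ω ∈ Ω : R δ_ω = P} is measurable, and if R μ = P for a probability measure μ, then μ({ω : R δ_ω = P}) = 1; in particular {ω : R δ_ω = P} is nonempty. -/

import Mathlib

open MeasureTheory Topology Filter

/-- The rank-one operator `|φ⟩⟨φ|`. -/
noncomputable def rankOne {H : Type*} [NormedAddCommGroup H] [InnerProductSpace ℂ H]
    (φ : H) : H →L[ℂ] H := (innerSL ℂ φ).smulRight φ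

/-- The set of rank-one orthogonal projections (pure states / projective Hilbert space). -/
noncomputable def projSet (H : Type*) [NormedAddCommGroup H] [InnerProductSpace ℂ H] :
    Set (H →L[ℂ] H) := {T | ∃ φ : H, ‖φ‖ = 1 ∧ T = rankOne φ}

/-- The trace of an operator computed along a Hilbert basis. -/
noncomputable def traceAlong {H ι : Type*} [NormedAddCommGroup H] [InnerProductSpace ℂ H]
    (b : HilbertBasis ι ℂ H) (A : H →L[ℂ] H) : ℂ :=
  ∑' i, inner ℂ (b i) (A (b i))

/-- `W` is a density operator: positive, trace class, with trace one
(trace computed along the Hilbert basis `b`). -/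
noncomputable def IsDensityOp {H ι : Type*} [NormedAddCommGroup H] [InnerProductSpace ℂ H]
    [CompleteSpace H] (b : HilbertBasis ι ℂ H) (W : H →L[ℂ] H) : Prop :=
  W.IsPositive ∧ HasSum (fun i => (inner ℂ (b i) (W (b i)) : ℂ)) 1

/-! Write `P = |φ⟩⟨φ|` and `f = R' P`; duality with `δ_ω` gives `f ω = ⟪φ, R δ_ω φ⟫`.
For a density operator `W = S²` with `S ≥ 0`, and any orthonormal family `v`, Parseval and
Bessel give `∑ ‖S vⱼ‖² ≤ ∑ᵢ ‖S bᵢ‖² = tr W = 1`. Hence `⟪φ, W φ⟫ = ‖S φ‖² ∈ [0, 1]`, and if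
`⟪φ, W φ⟫ = 1` then `S` vanishes on `φ^⊥`, which forces `W = P`. So `{ω | R δ_ω = P} = f⁻¹{1}`
is measurable. If `R μ = P`, then `∫ f dμ = ⟪φ, P φ⟫ = 1` with `f ≤ 1`, so `f = 1` `μ`-a.e.
Nonemptiness follows because `P` is `R μ` for some probability measure `μ`. -/

open scoped InnerProductSpace

theorem HilbertBasis.hasSum_norm_inner_sq {𝕜 E ι : Type*} [RCLike 𝕜] [NormedAddCommGroup E]
    [InnerProductSpace 𝕜 E] (b : HilbertBasis ι 𝕜 E) (x : E) :
    HasSum (fun i => ‖⟪b i, x⟫_𝕜‖ ^ 2) (‖x‖ ^ 2) := by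
  simpa [b.repr_apply_apply] using lp.hasSum_norm (p := 2) (by norm_num) (b.repr x)

theorem sum_norm_sq_apply_le_of_orthonormal {𝕜 E ι κ : Type*} [RCLike 𝕜] [NormedAddCommGroup E]
    [InnerProductSpace 𝕜 E] [CompleteSpace E] [Fintype κ] (b : HilbertBasis ι 𝕜 E) {S : E →L[𝕜] E}
    (hS : IsSelfAdjoint S) {t : ℝ} (ht : HasSum (fun i => ‖S (b i)‖ ^ 2) t) {v : κ → E}
    (hv : Orthonormal 𝕜 v) : ∑ j, ‖S (v j)‖ ^ 2 ≤ t := by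
  have hsymm : ∀ x y, ⟪S x, y⟫_𝕜 = ⟪x, S y⟫_𝕜 := hS.isSymmetric
  have hparseval : ∀ j, HasSum (fun i => ‖⟪v j, S (b i)⟫_𝕜‖ ^ 2) (‖S (v j)‖ ^ 2) := fun j => by
    simpa only [norm_inner_symm, hsymm] using b.hasSum_norm_inner_sq (S (v j))
  exact hasSum_le (fun i => hv.sum_inner_products_le (S (b i)))
    (hasSum_sum fun j _ => hparseval j) ht

lemma measure_preimage_one_eq_one_of_integral_eq_one {Ω : Type*} [MeasurableSpace Ω]
    {μ : Measure Ω} [IsProbabilityMeasure μ] {f : Ω → ℝ} (hf : Measurable f)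
    (hf01 : ∀ ω, f ω ∈ Set.Icc 0 1) (hint : ∫ ω, f ω ∂μ = 1) : μ (f ⁻¹' {1}) = 1 := by
  have hfi : Integrable f μ := .of_mem_Icc 0 1 hf.aemeasurable (ae_of_all _ hf01)
  have hae : f =ᵐ[μ] fun _ => 1 :=
    (integral_eq_iff_of_ae_le hfi (integrable_const 1) (ae_of_all _ fun ω => (hf01 ω).2)).1
      (by simpa using hint)
  exact (mem_ae_iff_prob_eq_one (hf (measurableSet_singleton 1))).1 hae

section DensityOperator

variable {H ι : Type*} [NormedAddCommGroup H] [InnerProductSpace ℂ H]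

lemma rankOne_apply (φ x : H) : rankOne φ x = ⟪φ, x⟫_ℂ • φ := rfl

lemma inner_rankOne_apply_self {φ : H} (hφ : ‖φ‖ = 1) : ⟪φ, rankOne φ φ⟫_ℂ = 1 := by
  rw [rankOne_apply, inner_smul_right, inner_self_eq_one_of_norm_eq_one hφ, one_mul]

lemma isPositive_rankOne (φ : H) : (rankOne φ).IsPositive :=
  InnerProductSpace.isPositive_rankOne_self φ

lemma traceAlong_mul_rankOne (b : HilbertBasis ι ℂ H) (W : H →L[ℂ] H) (φ : H) :
    traceAlong b (W * rankOne φ) = ⟪φ, W φ⟫_ℂ := by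
  simp only [traceAlong, mul_apply_eq_comp, rankOne_apply, map_smul, inner_smul_right,
    b.tsum_inner_mul_inner]

variable [CompleteSpace H]

lemma isDensityOp_rankOne (b : HilbertBasis ι ℂ H) {φ : H} (hφ : ‖φ‖ = 1) :
    IsDensityOp b (rankOne φ) := by
  refine ⟨isPositive_rankOne φ, ?_⟩
  simpa [rankOne_apply, inner_smul_right, hφ] using b.hasSum_inner_mul_inner φ φ

lemma IsSelfAdjoint.inner_mul_self_apply {S : H →L[ℂ] H} (hS : IsSelfAdjoint S) (x : H) :
    ⟪x, (S * S) x⟫_ℂ = (‖S x‖ ^ 2 : ℝ) := by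
  rw [mul_apply_eq_comp, ← ContinuousLinearMap.adjoint_inner_left, hS.adjoint_eq,
    inner_self_eq_norm_sq_to_K]
  norm_cast

lemma IsDensityOp.exists_sqrt {b : HilbertBasis ι ℂ H} {W : H →L[ℂ] H} (hW : IsDensityOp b W) :
    ∃ S : H →L[ℂ] H, IsSelfAdjoint S ∧ W = S * S ∧ HasSum (fun i => ‖S (b i)‖ ^ 2) 1 := by
  have hW0 : 0 ≤ W := (ContinuousLinearMap.nonneg_iff_isPositive W).2 hW.1
  obtain ⟨S, hS0, hSS⟩ : ∃ S : H →L[ℂ] H, 0 ≤ S ∧ W = S * S :=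
    ⟨CFC.sqrt W, CFC.sqrt_nonneg W, (CFC.sqrt_mul_sqrt_self W hW0).symm⟩
  refine ⟨S, hS0.isSelfAdjoint, hSS, ?_⟩
  have htrace := hW.2
  simp only [hSS, hS0.isSelfAdjoint.inner_mul_self_apply] at htrace
  rwa [← Complex.ofReal_one, Complex.hasSum_ofReal] at htrace

lemma IsDensityOp.mem_Icc_of_inner_apply_eq {b : HilbertBasis ι ℂ H} {W : H →L[ℂ] H}
    (hW : IsDensityOp b W) {φ : H} (hφ : ‖φ‖ = 1) {r : ℝ} (hr : ⟪φ, W φ⟫_ℂ = r) :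
    r ∈ Set.Icc 0 1 := by
  obtain ⟨S, hS, rfl, htrace⟩ := hW.exists_sqrt
  obtain rfl : ‖S φ‖ ^ 2 = r := by exact_mod_cast (hS.inner_mul_self_apply φ).symm.trans hr
  refine ⟨by positivity, ?_⟩
  simpa using sum_norm_sq_apply_le_of_orthonormal b hS htrace (v := ![φ]) (by simp [hφ])

lemma IsDensityOp.apply_eq_zero_of_inner_eq_one {b : HilbertBasis ι ℂ H} {W : H →L[ℂ] H}
    (hW : IsDensityOp b W) {φ : H} (hφ : ‖φ‖ = 1) (h1 : ⟪φ, W φ⟫_ℂ = 1) {ψ : H}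
    (hψ : ⟪φ, ψ⟫_ℂ = 0) : W ψ = 0 := by
  obtain ⟨S, hS, rfl, htrace⟩ := hW.exists_sqrt
  have hSφ : ‖S φ‖ ^ 2 = 1 := by exact_mod_cast (hS.inner_mul_self_apply φ).symm.trans h1
  suffices hSψ : S ψ = 0 by rw [mul_apply_eq_comp, hSψ, map_zero]
  rcases eq_or_ne ψ 0 with rfl | hψ0
  · exact map_zero S
  set u : H := ((‖ψ‖⁻¹ : ℝ) : ℂ) • ψ
  have hu : ‖u‖ = 1 := by simp [u, norm_smul, hψ0]
  have hφu : ⟪φ, u⟫_ℂ = 0 := by simp [u, hψ]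
  have hbound := sum_norm_sq_apply_le_of_orthonormal b hS htrace (v := ![φ, u])
    (by simp [hφ, hu, hφu])
  have hSu : S u = 0 := by simpa [hSφ] using hbound
  simpa [u, hψ0] using hSu

lemma eq_inner_smul_rankOne {T : H →L[ℂ] H} (hT : IsSelfAdjoint T) {φ : H} (hφ : ‖φ‖ = 1)
    (hker : ∀ ψ, ⟪φ, ψ⟫_ℂ = 0 → T ψ = 0) : T = ⟪φ, T φ⟫_ℂ • rankOne φ := by
  have horth : ∀ x, ⟪φ, x - ⟪φ, x⟫_ℂ • φ⟫_ℂ = 0 := fun x => by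
    rw [inner_sub_right, inner_smul_right, inner_self_eq_one_of_norm_eq_one hφ, mul_one, sub_self]
  have hTφ : T φ = ⟪φ, T φ⟫_ℂ • φ := by
    set ψ := T φ - ⟪φ, T φ⟫_ℂ • φ
    have hψφ : ⟪ψ, φ⟫_ℂ = 0 := by rw [← inner_conj_symm, horth, map_zero]
    have hψψ : ⟪ψ, ψ⟫_ℂ = 0 := calc
      ⟪ψ, ψ⟫_ℂ = ⟪ψ, T φ⟫_ℂ - ⟪φ, T φ⟫_ℂ * ⟪ψ, φ⟫_ℂ := by
        rw [← inner_smul_right, ← inner_sub_right]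
      _ = ⟪ψ, T φ⟫_ℂ := by rw [hψφ, mul_zero, sub_zero]
      _ = ⟪T ψ, φ⟫_ℂ := (hT.isSymmetric ψ φ).symm
      _ = 0 := by rw [hker ψ (horth _), inner_zero_left]
    exact sub_eq_zero.1 (inner_self_eq_zero.1 hψψ)
  ext x
  have hTx := hker _ (horth x)
  rw [map_sub, map_smul, sub_eq_zero] at hTx
  rw [hTx, smul_apply, rankOne_apply, smul_comm, ← hTφ]

lemma IsDensityOp.eq_rankOne_iff {b : HilbertBasis ι ℂ H} {W : H →L[ℂ] H}
    (hW : IsDensityOp b W) {φ : H} (hφ : ‖φ‖ = 1) : W = rankOne φ ↔ ⟪φ, W φ⟫_ℂ = 1 := by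
  refine ⟨fun h => h ▸ inner_rankOne_apply_self hφ, fun h1 => ?_⟩
  calc W = ⟪φ, W φ⟫_ℂ • rankOne φ :=
        eq_inner_smul_rankOne hW.1.isSelfAdjoint hφ fun _ => hW.apply_eq_zero_of_inner_eq_one hφ h1
    _ = rankOne φ := by rw [h1, one_smul]

end DensityOperator

theorem stmt18_general {H ι Ω : Type*} [NormedAddCommGroup H] [InnerProductSpace ℂ H] [CompleteSpace H]
    [MeasurableSpace Ω] (b : HilbertBasis ι ℂ H)
    (R : SignedMeasure Ω →ₗ[ℝ] (H →L[ℂ] H))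
    (R' : (H →L[ℂ] H) → Ω → ℝ)
    (hmeas : ∀ A : H →L[ℂ] H, IsSelfAdjoint A → Measurable (R' A))
    (hdual : ∀ (μ : Measure Ω) [IsProbabilityMeasure μ], ∀ A : H →L[ℂ] H, IsSelfAdjoint A →
        traceAlong b (R μ.toSignedMeasure * A) = ((∫ ω, R' A ω ∂μ : ℝ) : ℂ))
    (hstates : ∀ (μ : Measure Ω) [IsProbabilityMeasure μ], IsDensityOp b (R μ.toSignedMeasure))
    (hsurj : ∀ W : H →L[ℂ] H, IsDensityOp b W →
        ∃ (μ : Measure Ω) (hμ : IsProbabilityMeasure μ),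
          R (letI := hμ; μ.toSignedMeasure) = W)
    (P : H →L[ℂ] H) (hP : P ∈ projSet H) :
    MeasurableSet {ω : Ω | R (Measure.dirac ω).toSignedMeasure = P} ∧
    (∀ (μ : Measure Ω) [IsProbabilityMeasure μ], R μ.toSignedMeasure = P →
        μ {ω : Ω | R (Measure.dirac ω).toSignedMeasure = P} = 1) ∧
    {ω : Ω | R (Measure.dirac ω).toSignedMeasure = P}.Nonempty := by
  obtain ⟨φ, hφ, rfl⟩ := hP
  have hPsa : IsSelfAdjoint (rankOne φ) := (isPositive_rankOne φ).isSelfAdjoint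
  set f := R' (rankOne φ)
  have hf : Measurable f := hmeas _ hPsa
  have hexp : ∀ (μ : Measure Ω) [IsProbabilityMeasure μ],
      ⟪φ, R μ.toSignedMeasure φ⟫_ℂ = ∫ ω, f ω ∂μ := fun μ _ => by
    rw [← traceAlong_mul_rankOne b, hdual μ _ hPsa]
  have hdirac : ∀ ω, ⟪φ, R (Measure.dirac ω).toSignedMeasure φ⟫_ℂ = f ω := fun ω => by
    rw [hexp, integral_dirac' f ω hf.stronglyMeasurable]
  have hset : {ω | R (Measure.dirac ω).toSignedMeasure = rankOne φ} = f ⁻¹' {1} := by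
    ext ω
    rw [Set.mem_ofPred_eq, (hstates _).eq_rankOne_iff hφ, hdirac]
    exact_mod_cast Iff.rfl
  have hf01 : ∀ ω, f ω ∈ Set.Icc 0 1 := fun ω =>
    (hstates _).mem_Icc_of_inner_apply_eq hφ (hdirac ω)
  have hfull : ∀ (μ : Measure Ω) [IsProbabilityMeasure μ], R μ.toSignedMeasure = rankOne φ →
      μ (f ⁻¹' {1}) = 1 := fun μ _ hμ => by
    refine measure_preimage_one_eq_one_of_integral_eq_one hf hf01 ?_
    exact_mod_cast (hexp μ).symm.trans (hμ ▸ inner_rankOne_apply_self hφ)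
  rw [hset]
  refine ⟨hf (measurableSet_singleton 1), hfull, ?_⟩
  obtain ⟨μ, hμ, hRμ⟩ := hsurj _ (isDensityOp_rankOne b hφ)
  exact nonempty_of_measure_ne_zero (ne_of_eq_of_ne (@hfull μ hμ hRμ) one_ne_zero)

theorem stmt18 {H ι Ω : Type*} [NormedAddCommGroup H] [InnerProductSpace ℂ H] [CompleteSpace H]
    [SecondCountableTopology H] [MeasurableSpace Ω] (b : HilbertBasis ι ℂ H)
    (R : SignedMeasure Ω →ₗ[ℝ] (H →L[ℂ] H))
    (R' : (H →L[ℂ] H) → Ω → ℝ)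
    (hmeas : ∀ A : H →L[ℂ] H, IsSelfAdjoint A → Measurable (R' A))
    (hbdd : ∀ A : H →L[ℂ] H, IsSelfAdjoint A → ∃ C : ℝ, ∀ ω, |R' A ω| ≤ C)
    (hdual : ∀ (μ : Measure Ω) [IsProbabilityMeasure μ], ∀ A : H →L[ℂ] H, IsSelfAdjoint A →
        traceAlong b (R μ.toSignedMeasure * A) = ((∫ ω, R' A ω ∂μ : ℝ) : ℂ))
    (hstates : ∀ (μ : Measure Ω) [IsProbabilityMeasure μ], IsDensityOp b (R μ.toSignedMeasure))
    (hsurj : ∀ W : H →L[ℂ] H, IsDensityOp b W →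
        ∃ (μ : Measure Ω) (hμ : IsProbabilityMeasure μ),
          R (letI := hμ; μ.toSignedMeasure) = W)
    (P : H →L[ℂ] H) (hP : P ∈ projSet H) :
    MeasurableSet {ω : Ω | R (Measure.dirac ω).toSignedMeasure = P} ∧
    (∀ (μ : Measure Ω) [IsProbabilityMeasure μ], R μ.toSignedMeasure = P →
        μ {ω : Ω | R (Measure.dirac ω).toSignedMeasure = P} = 1) ∧
    {ω : Ω | R (Measure.dirac ω).toSignedMeasure = P}.Nonempty :=
  stmt18_general b R R' hmeas hdual hstates hsurj P hP
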